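/- Let G be a graph, ω an end of G with relative degree d_{e/v}(ω) > m (m rational) and |Dom(ω)| finite, and let S ⊆ V(G) be finite. Then G_ω = G − Dom(ω) has an ω̂-region Ĥ with V(Ĥ) ∩ S = ∅ and |∂_e Ĥ| / |∂_v Ĥ| > m − |Dom(ω)|. -/

import Mathlib

open scoped ENNReal

namespace Paper

variable {V : Type*} {W : Type*}

/-- Reachability in `G` by a walk avoiding the vertex set `S`. -/
def ReachAvoid (G : SimpleGraph V) (S : Set V) (u v : V) : Prop :=
  ∃ p : G.Walk u v, ∀ x ∈ p.support, x ∉ S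

/-- A ray (one-way infinite path) in `G`. -/
structure IsRay (G : SimpleGraph V) (f : ℕ → V) : Prop where
  inj : Function.Injective f
  adj : ∀ n, G.Adj (f n) (f (n + 1))

/-- Two rays are equivalent (belong to the same end) if no finite vertex set
separates them: for every finite `S` some vertex of the first ray can be joined
to some vertex of the second by a walk avoiding `S`. -/
def EquivRay (G : SimpleGraph V) (f g : ℕ → V) : Prop :=
  ∀ S : Set V, S.Finite → ∃ m n, ReachAvoid G S (f m) (g n)

/-- The set of ends of `G`: rays modulo equivalence. -/
def Ends (G : SimpleGraph V) :=
  Quot (fun f g : {f : ℕ → V // IsRay G f} => EquivRay G f.1 g.1)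

/-- `v` dominates the ray `f`: there are infinitely many `v`–`V(f)` paths
pairwise disjoint except in `v`. -/
def DominatesRay (G : SimpleGraph V) (v : V) (f : ℕ → V) : Prop :=
  ∃ (g : ℕ → ℕ) (p : ∀ n, G.Walk v (f (g n))),
    Function.Injective g ∧ (∀ n, (p n).IsPath) ∧
    ∀ m n, m ≠ n → ∀ x ∈ (p m).support, x ∈ (p n).support → x = v

/-- The set of vertices dominating the end of the ray `r`. -/
def Dom (G : SimpleGraph V) (r : ℕ → V) : Set V := {v | DominatesRay G v r}

/-- Vertex-boundary of the vertex set `A`. -/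
def vBoundary (G : SimpleGraph V) (A : Set V) : Set V :=
  {x | x ∈ A ∧ ∃ y, y ∉ A ∧ G.Adj x y}

/-- Edge-boundary of the vertex set `A`. -/
def eBoundary (G : SimpleGraph V) (A : Set V) : Set (Sym2 V) :=
  {e | ∃ x y, x ∈ A ∧ y ∉ A ∧ G.Adj x y ∧ e = s(x, y)}

/-- `S` is a `V'`–`Ω(A)` separator: `V' ⊄ S` and no component of `G - S`
contains both a vertex of `V'` and (the tail of) a ray lying in `A`. -/
def SepVertsEndsIn (G : SimpleGraph V) (V' S A : Set V) : Prop :=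
  ¬ V' ⊆ S ∧ ∀ v ∈ V', ∀ f : ℕ → V, IsRay G f → Set.range f ⊆ A →
    ∀ n, (∀ m, n ≤ m → f m ∉ S) → ¬ ReachAvoid G S v (f n)

/-- `S` is an inclusion-minimal `V'`–`Ω(A)` separator. -/
def MinSepVertsEndsIn (G : SimpleGraph V) (V' S A : Set V) : Prop :=
  SepVertsEndsIn G V' S A ∧ ∀ S' ⊂ S, ¬ SepVertsEndsIn G V' S' A

/-- The graph `G_ω`: `G` minus the dominating vertices of the end of `r`. -/
def Gmin (G : SimpleGraph V) (r : ℕ → V) : SimpleGraph ((Dom G r)ᶜ : Set V) :=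
  G.induce ((Dom G r)ᶜ : Set V)

/-- A ray of `G_ω` belonging to (the unique end `ω̂` induced by) the end `ω` of
the ray `r`. -/
def InDeletedEnd (G : SimpleGraph V) (r : ℕ → V)
    (f : ℕ → ((Dom G r)ᶜ : Set V)) : Prop :=
  IsRay (Gmin G r) f ∧ EquivRay G (fun n => (f n : V)) r

/-- An `ω̂`-region of `G_ω`: induced connected, finite vertex-boundary,
containing a ray of `ω̂`. -/
def IsOmegaRegion (G : SimpleGraph V) (r : ℕ → V)
    (A : Set ((Dom G r)ᶜ : Set V)) : Prop :=
  ((Gmin G r).induce A).Connected ∧ (vBoundary (Gmin G r) A).Finite ∧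
    ∃ f, InDeletedEnd G r f ∧ Set.range f ⊆ A

/-- `(Ĥ_i) → ω̂` : a sequence of distinct nested `ω̂`-regions whose
vertex-boundaries are minimal separators. -/
def Converges (G : SimpleGraph V) (r : ℕ → V)
    (A : ℕ → Set ((Dom G r)ᶜ : Set V)) : Prop :=
  Function.Injective A ∧ (∀ i, IsOmegaRegion G r (A i)) ∧
    (∀ i, A (i + 1) ⊆ A i \ vBoundary (Gmin G r) (A i)) ∧
    (∀ i, MinSepVertsEndsIn (Gmin G r) (vBoundary (Gmin G r) (A i))
      (vBoundary (Gmin G r) (A (i + 1))) (A (i + 1)))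

/-- The ratio `|∂_e A| / |∂_v A|`, as an extended nonnegative real. -/
noncomputable def bratio (G : SimpleGraph V) (A : Set V) : ℝ≥0∞ :=
  ((eBoundary G A).encard : ℝ≥0∞) / ((vBoundary G A).encard : ℝ≥0∞)

open Classical in
/-- The relative degree `d_{e/v}` of the end of the ray `r`. -/
noncomputable def relDegree (G : SimpleGraph V) (r : ℕ → V) : ℝ≥0∞ :=
  if (Dom G r).Infinite ∨ ¬ ∃ f, InDeletedEnd G r f then
    ((Dom G r).encard : ℝ≥0∞)
  else
    ((Dom G r).encard : ℝ≥0∞) +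
      ⨅ A : {A : ℕ → Set ((Dom G r)ᶜ : Set V) // Converges G r A},
        Filter.atTop.liminf fun i => bratio (Gmin G r) (A.1 i)

/-- The degree of a vertex, as an extended real. -/
noncomputable def degER (G : SimpleGraph V) (v : V) : EReal :=
  (((G.neighborSet v).encard : ℝ≥0∞) : EReal)

/-- A subdivision of `K_k` in `G` with branching vertices `b 0, …, b (k-1)`. -/
def HasTKOn (G : SimpleGraph V) {k : ℕ} (b : Fin k ↪ V) : Prop :=
  ∃ p : ∀ i j : Fin k, G.Walk (b i) (b j),
    (∀ i j, i ≠ j → (p i j).IsPath) ∧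
    (∀ i j, i ≠ j → ∀ x ∈ (p i j).support, x ∈ Set.range b → x = b i ∨ x = b j) ∧
    (∀ i j i' j', i ≠ j → i' ≠ j' → s(i, j) ≠ s(i', j') →
      ∀ x ∈ (p i j).support, x ∈ (p i' j').support → x ∈ Set.range b)

/-- `K_k` is a topological minor of `G`. -/
def HasTopK (G : SimpleGraph V) (k : ℕ) : Prop :=
  ∃ b : Fin k ↪ V, HasTKOn G b

/-- A subdivision of `K_{ℵ₀}` in `G` with branching vertices `b 0, b 1, …`. -/
def HasTKInfOn (G : SimpleGraph V) (b : ℕ ↪ V) : Prop :=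
  ∃ p : ∀ i j : ℕ, G.Walk (b i) (b j),
    (∀ i j, i ≠ j → (p i j).IsPath) ∧
    (∀ i j, i ≠ j → ∀ x ∈ (p i j).support, x ∈ Set.range b → x = b i ∨ x = b j) ∧
    (∀ i j i' j', i ≠ j → i' ≠ j' → s(i, j) ≠ s(i', j') →
      ∀ x ∈ (p i j).support, x ∈ (p i' j').support → x ∈ Set.range b)

/-- `K_k` is a minor of `G` (with finite branch sets). -/
def HasKMinor (G : SimpleGraph V) (k : ℕ) : Prop :=
  ∃ B : Fin k → Finset V,
    (∀ i, (B i).Nonempty) ∧ (∀ i j, i ≠ j → Disjoint (B i) (B j)) ∧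
    (∀ i, (G.induce (B i : Set V)).Connected) ∧
    (∀ i j, i ≠ j → ∃ x ∈ B i, ∃ y ∈ B j, G.Adj x y)

/-- The average degree of the finite induced subgraph of `G` on `s`. -/
noncomputable def avgDegOn (G : SimpleGraph V) (s : Finset V) : ℝ :=
  (∑ v ∈ s, ((G.neighborSet v ∩ ↑s).ncard : ℝ)) / s.card

/-- `G` is rayless. -/
def Rayless (G : SimpleGraph V) : Prop := ¬ ∃ f : ℕ → V, IsRay G f

/-- The average degree of the vertex set `F` into `A` in `G`. -/
noncomputable def avgDegIn (G : SimpleGraph V) (A F : Set V) : ℝ :=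
  (∑ᶠ v ∈ F, ((G.neighborSet v ∩ A).ncard : ℝ)) / F.ncard

/-!
Every vertex `v` of `G_ω` fails to dominate the tail of `r` that lies in `G_ω`, so a greedy
choice of paths shows that some finite set avoiding `v` separates `v` from a tail of that ray.
Hence any finite `B` is separated from a tail of the ray by a finite set disjoint from `B`; an
inclusion-minimal such separator `X` is the vertex-boundary of the region `Ĥ` formed by the
vertices reaching the tail outside `X` together with their neighbours in `X`, and it is a
minimal `B`–`Ω(Ĥ)` separator. Starting from `S` (plus a vertex of the ray) and iterating with
`B := ∂_v Ĥ` yields a sequence `Ĥ_i → ω̂` avoiding `S`. Since `d_{e/v}(ω) > m`, the ratios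
`|∂_e Ĥ_i| / |∂_v Ĥ_i|` have `liminf > m - |Dom(ω)|`, so one of the `Ĥ_i` will do.
-/

open Filter

section Walks

variable {G : SimpleGraph V} {S A : Set V} {u v w : V}

namespace ReachAvoid

lemma notMem_left (h : ReachAvoid G S u v) : u ∉ S :=
  let ⟨p, hp⟩ := h
  hp u p.start_mem_support

lemma refl (hu : u ∉ S) : ReachAvoid G S u u :=
  ⟨.nil, by simpa using hu⟩

lemma mono {S' : Set V} (hS : S' ⊆ S) (h : ReachAvoid G S u v) : ReachAvoid G S' u v :=
  let ⟨p, hp⟩ := h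
  ⟨p, fun x hx hxS => hp x hx (hS hxS)⟩

lemma symm (h : ReachAvoid G S u v) : ReachAvoid G S v u :=
  let ⟨p, hp⟩ := h
  ⟨p.reverse, fun x hx => hp x (by simpa using hx)⟩

lemma trans (huv : ReachAvoid G S u v) (hvw : ReachAvoid G S v w) : ReachAvoid G S u w := by
  obtain ⟨p, hp⟩ := huv
  obtain ⟨q, hq⟩ := hvw
  refine ⟨p.append q, fun x hx => ?_⟩
  rcases (SimpleGraph.Walk.mem_support_append_iff p q).1 hx with hx | hx
  exacts [hp x hx, hq x hx]

lemma cons (hadj : G.Adj u v) (hu : u ∉ S) (h : ReachAvoid G S v w) : ReachAvoid G S u w := by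
  obtain ⟨p, hp⟩ := h
  refine ⟨.cons hadj p, fun x hx => ?_⟩
  rw [SimpleGraph.Walk.support_cons, List.mem_cons] at hx
  rcases hx with rfl | hx
  exacts [hu, hp x hx]

-- Every vertex of an `S`-avoiding walk to `v` reaches `v` avoiding `S`.
lemma of_forall_notMem {S' : Set V} (h : ReachAvoid G S u v)
    (hS' : ∀ y, ReachAvoid G S y v → y ∉ S') : ReachAvoid G S' u v := by
  classical
  obtain ⟨p, hp⟩ := h
  exact ⟨p, fun y hy => hS' y
    ⟨p.dropUntil y hy, fun x hx => hp x (p.support_dropUntil_subset_support hy hx)⟩⟩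

lemma reachable (h : ReachAvoid G S u v) : G.Reachable u v :=
  let ⟨p, _⟩ := h
  p.reachable

lemma reachable_induce (h : ReachAvoid G Aᶜ u v) (hu : u ∈ A) (hv : v ∈ A) :
    (G.induce A).Reachable ⟨u, hu⟩ ⟨v, hv⟩ :=
  let ⟨p, hp⟩ := h
  ⟨p.induce A fun x hx => not_not.1 (hp x hx)⟩

end ReachAvoid

lemma reachAvoid_empty_of_reachable (h : G.Reachable u v) : ReachAvoid G ∅ u v :=
  let ⟨p⟩ := h
  ⟨p, fun _ _ => Set.notMem_empty _⟩

lemma not_reachAvoid_vBoundary (hu : u ∉ A) (hv : v ∈ A) :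
    ¬ ReachAvoid G (vBoundary G A) u v := by
  rintro ⟨p, hp⟩
  obtain ⟨d, hd, hdA, hdA'⟩ := p.reverse.exists_boundary_dart A hv hu
  exact hp d.fst (by simpa using p.reverse.dart_fst_mem_support_of_mem_darts hd)
    ⟨hdA, d.snd, hdA', d.adj⟩

lemma _root_.SimpleGraph.Walk.exists_last_mem {B : Set V} (p : G.Walk u w)
    (hp : ∃ x ∈ p.support, x ∈ B) :
    ∃ b ∈ B, ∃ q : G.Walk b w, q.support ⊆ p.support ∧ ∀ x ∈ q.support, x ∈ B → x = b := by
  induction p with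
  | nil =>
    obtain ⟨x, hx, hxB⟩ := hp
    rw [SimpleGraph.Walk.support_nil, List.mem_singleton] at hx
    subst hx
    exact ⟨x, hxB, .nil, List.Subset.refl _, by simp⟩
  | @cons x y w hadj p ih =>
    by_cases hpB : ∃ z ∈ p.support, z ∈ B
    · obtain ⟨b, hb, q, hqp, hqB⟩ := ih hpB
      exact ⟨b, hb, q, fun z hz => List.mem_cons_of_mem x (hqp hz), hqB⟩
    · push Not at hpB
      have hxB : x ∈ B := by
        obtain ⟨z, hz, hzB⟩ := hp
        rw [SimpleGraph.Walk.support_cons, List.mem_cons] at hz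
        exact hz.resolve_right (fun hz' => hpB z hz' hzB) ▸ hzB
      refine ⟨x, hxB, .cons hadj p, List.Subset.refl _, fun z hz hzB => ?_⟩
      rw [SimpleGraph.Walk.support_cons, List.mem_cons] at hz
      exact hz.resolve_right fun hz => hpB z hz hzB

lemma reachAvoid_of_adj_succ {f : ℕ → V} (hf : ∀ n, G.Adj (f n) (f (n + 1))) {a b : ℕ}
    (hab : a ≤ b) (hS : ∀ k, a ≤ k → f k ∉ S) : ReachAvoid G S (f a) (f b) := by
  induction b, hab using Nat.le_induction with
  | base => exact .refl (hS a le_rfl)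
  | succ b hab ih =>
    exact ih.trans (.cons (hf b) (hS b hab) (.refl (hS (b + 1) (hab.trans b.le_succ))))

end Walks

section Rays

variable {G : SimpleGraph V} {f : ℕ → V}

lemma eventually_notMem_of_injective (hf : Function.Injective f) {S : Set V} (hS : S.Finite) :
    ∀ᶠ n in atTop, f n ∉ S := by
  rw [← Nat.cofinite_eq_atTop]
  exact hf.tendsto_cofinite.eventually hS.eventually_cofinite_notMem

lemma IsRay.shift (hf : IsRay G f) (c : ℕ) : IsRay G (fun n => f (c + n)) :=
  ⟨fun a b h => by simpa using hf.inj h, fun n => hf.adj (c + n)⟩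

lemma IsRay.induce {s : Set V} {f : ℕ → s} (hf : IsRay G fun n => (f n : V)) :
    IsRay (G.induce s) f :=
  ⟨fun _ _ h => hf.inj (congrArg Subtype.val h), hf.adj⟩

lemma equivRay_shift (hf : Function.Injective f) (c : ℕ) : EquivRay G (fun n => f (c + n)) f := by
  intro S hS
  obtain ⟨N, hN⟩ := eventually_atTop.1 (eventually_notMem_of_injective hf hS)
  exact ⟨N, c + N, .refl (hN (c + N) (Nat.le_add_left N c))⟩

lemma DominatesRay.map {G' : SimpleGraph W} (φ : G ↪g G') {v : V} (h : DominatesRay G v f) :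
    DominatesRay G' (φ v) (φ ∘ f) := by
  obtain ⟨g, p, hg, hp, hdisj⟩ := h
  refine ⟨g, fun n => (p n).map φ.toHom, hg, fun n => (hp n).map φ.injective, ?_⟩
  intro a b hab x hxa hxb
  simp only [SimpleGraph.Walk.support_map, List.mem_map] at hxa hxb
  obtain ⟨y, hy, rfl⟩ := hxa
  obtain ⟨z, hz, hzy⟩ := hxb
  obtain rfl := φ.injective hzy
  exact congrArg φ (hdisj a b hab z hy hz)

lemma DominatesRay.of_shift {v : V} {c : ℕ} (h : DominatesRay G v fun n => f (c + n)) :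
    DominatesRay G v f :=
  let ⟨g, p, hg, hp, hdisj⟩ := h
  ⟨fun n => c + g n, p, fun _ _ h => hg (Nat.add_left_cancel h), hp, hdisj⟩

end Rays

section Domination

variable {G : SimpleGraph V} {f : ℕ → V} {v : V}

lemma dominatesRay_of_frequently_reachAvoid
    (h : ∀ X : Set V, X.Finite → v ∉ X → ∃ᶠ n in atTop, ReachAvoid G X v (f n)) :
    DominatesRay G v f := by
  classical
  have hpath : ∀ (X : Finset V) (N : ℕ), ∃ n, N ≤ n ∧
      ∃ p : G.Walk v (f n), p.IsPath ∧ ∀ x ∈ p.support, x ∈ X → x = v := by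
    intro X N
    obtain ⟨n, hn, p, hp⟩ :=
      frequently_atTop.1 (h _ (X.finite_toSet.sdiff (t := {v})) fun hv => hv.2 rfl) N
    exact ⟨n, hn, p.bypass, p.bypass_isPath, fun x hx hxX => by_contra fun hxv =>
      hp x (p.support_bypass_subset_support hx) ⟨hxX, hxv⟩⟩
  choose n hn p hpath hmeet using hpath
  -- The `k`-th path meets the earlier ones only in `v` and ends beyond their endpoints.
  let used : ℕ → Finset V × ℕ := fun k =>
    Nat.rec (∅, 0) (fun _ s => (s.1 ∪ (p s.1 s.2).support.toFinset, n s.1 s.2 + 1)) k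
  have used_succ (k : ℕ) : used (k + 1) =
      ((used k).1 ∪ (p (used k).1 (used k).2).support.toFinset, n (used k).1 (used k).2 + 1) :=
    rfl
  have hmono : Monotone fun k => (used k).1 :=
    monotone_nat_of_le_succ fun k => by rw [used_succ]; exact Finset.subset_union_left
  have hdisj : ∀ i j, i < j → ∀ x ∈ (p (used i).1 (used i).2).support,
      x ∈ (p (used j).1 (used j).2).support → x = v := by
    intro i j hij x hi hj
    refine hmeet _ _ x hj (hmono (Nat.succ_le_of_lt hij) ?_)
    simp only [used_succ]
    exact Finset.mem_union_right _ (List.mem_toFinset.2 hi)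
  refine ⟨fun k => n (used k).1 (used k).2, fun k => p (used k).1 (used k).2,
    (strictMono_nat_of_lt_succ fun k => ?_).injective, fun k => hpath _ _, ?_⟩
  · have := hn (used (k + 1)).1 (used (k + 1)).2
    rw [used_succ] at this ⊢
    omega
  · intro i j hij x hi hj
    rcases hij.lt_or_gt with h | h
    exacts [hdisj i j h x hi hj, hdisj j i h x hj hi]

lemma exists_separator_of_not_dominatesRay (h : ¬ DominatesRay G v f) :
    ∃ X : Set V, X.Finite ∧ v ∉ X ∧ ∀ᶠ n in atTop, ¬ ReachAvoid G X v (f n) := by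
  contrapose! h
  exact dominatesRay_of_frequently_reachAvoid fun X hX hv => by
    simpa only [not_eventually, not_not] using h X hX hv

end Domination

section TailRegion

variable (G : SimpleGraph V) (f : ℕ → V)

def SeparatesTail (B X : Set V) (T : ℕ) : Prop :=
  ∀ n, T ≤ n → ∀ b ∈ B, ¬ ReachAvoid G X b (f n)

def tailReach (X : Set V) (T : ℕ) : Set V :=
  {u | ∃ n, T ≤ n ∧ ReachAvoid G X u (f n)}

def cutoffRegion (X : Set V) (T : ℕ) : Set V :=
  tailReach G f X T ∪ {x | x ∈ X ∧ ∃ u ∈ tailReach G f X T, G.Adj x u}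

variable {G f} {B X : Set V} {T : ℕ}

lemma exists_separatesTail (hund : ∀ v, ¬ DominatesRay G v f) (hB : B.Finite) :
    ∃ Y : Set V, Y.Finite ∧ Disjoint Y B ∧ ∀ᶠ n in atTop, ∀ b ∈ B, ¬ ReachAvoid G Y b (f n) := by
  choose X hX hvX hsep using fun v => exists_separator_of_not_dominatesRay (hund v)
  refine ⟨(⋃ b ∈ B, X b) \ B, (hB.biUnion fun b _ => hX b).sdiff, Set.disjoint_sdiff_left, ?_⟩
  filter_upwards [hB.eventually_all.2 fun b _ => hsep b] with n hn b hb ⟨p, hp⟩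
  -- after its last vertex `b'` in `B`, the walk would avoid the separator of `b'`
  obtain ⟨b', hb', q, hqp, hqB⟩ := p.exists_last_mem ⟨b, p.start_mem_support, hb⟩
  refine hn b' hb' ⟨q, fun x hx hxX => ?_⟩
  by_cases hxB : x ∈ B
  · exact hvX b' (hqB x hx hxB ▸ hxX)
  · exact hp x (hqp hx) ⟨Set.mem_biUnion hb' hxX, hxB⟩

lemma mem_tailReach (hfX : ∀ n, T ≤ n → f n ∉ X) {n : ℕ} (hn : T ≤ n) :
    f n ∈ tailReach G f X T :=
  ⟨n, hn, .refl (hfX n hn)⟩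

lemma mem_cutoffRegion (hfX : ∀ n, T ≤ n → f n ∉ X) {n : ℕ} (hn : T ≤ n) :
    f n ∈ cutoffRegion G f X T :=
  Or.inl (mem_tailReach hfX hn)

lemma vBoundary_cutoffRegion_subset : vBoundary G (cutoffRegion G f X T) ⊆ X := by
  rintro a ⟨⟨n, hn, ha⟩ | ha, y, hy, hadj⟩
  · by_cases hyX : y ∈ X
    · exact absurd (Or.inr ⟨hyX, a, ⟨n, hn, ha⟩, hadj.symm⟩) hy
    · exact absurd (Or.inl ⟨n, hn, ha.cons hadj.symm hyX⟩) hy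
  · exact ha.1

lemma connected_induce_cutoffRegion (hf : ∀ n, G.Adj (f n) (f (n + 1)))
    (hfX : ∀ n, T ≤ n → f n ∉ X) : (G.induce (cutoffRegion G f X T)).Connected := by
  have hC : ∀ u ∈ tailReach G f X T, ReachAvoid G (cutoffRegion G f X T)ᶜ u (f T) := by
    rintro u ⟨n, hn, hu⟩
    have hun : ReachAvoid G (tailReach G f X T)ᶜ u (f n) :=
      hu.of_forall_notMem fun y hy hyC => hyC ⟨n, hn, hy⟩
    have hTn : ReachAvoid G (tailReach G f X T)ᶜ (f T) (f n) :=
      reachAvoid_of_adj_succ hf hn fun k hk hkC => hkC (mem_tailReach hfX hk)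
    exact (hun.trans hTn.symm).mono (Set.compl_subset_compl.2 Set.subset_union_left)
  rw [SimpleGraph.connected_iff_exists_forall_reachable]
  refine ⟨⟨f T, mem_cutoffRegion hfX le_rfl⟩, ?_⟩
  rintro ⟨u, hu⟩
  refine (ReachAvoid.reachable_induce ?_ hu _).symm
  rcases hu with hu | ⟨hX, w, hw, hadj⟩
  · exact hC u hu
  · exact (hC w hw).cons hadj (not_not.2 (Or.inr ⟨hX, w, hw, hadj⟩))

lemma disjoint_cutoffRegion (hsep : SeparatesTail G f B X T) (hXB : Disjoint X B) :
    Disjoint (cutoffRegion G f X T) B := by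
  rw [Set.disjoint_left]
  rintro b (⟨n, hn, hb⟩ | hb) hbB
  · exact hsep n hn b hbB hb
  · exact Set.disjoint_left.1 hXB hb.1 hbB

lemma frequently_reachAvoid_of_mem_cutoffRegion (hf : ∀ n, G.Adj (f n) (f (n + 1)))
    (hsep : SeparatesTail G f B X T) (hXB : Disjoint X B) (hfB : ∀ n, T ≤ n → f n ∉ B)
    {u : V} (hu : u ∈ cutoffRegion G f X T) : ∃ᶠ n in atTop, ReachAvoid G B u (f n) := by
  have hC : ∀ w ∈ tailReach G f X T, ∃ᶠ n in atTop, ReachAvoid G B w (f n) := by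
    rintro w ⟨n₀, hn₀, hw⟩
    have hwB : ReachAvoid G B w (f n₀) :=
      hw.of_forall_notMem fun y hy hyB => hsep n₀ hn₀ y hyB hy
    refine frequently_atTop.2 fun N => ⟨max N n₀, le_max_left N n₀, hwB.trans ?_⟩
    exact reachAvoid_of_adj_succ hf (le_max_right N n₀) fun k hk => hfB k (hn₀.trans hk)
  rcases hu with hu | ⟨hX, w, hw, hadj⟩
  · exact hC u hu
  · exact (hC w hw).mono fun n h => h.cons hadj (Set.disjoint_left.1 hXB hX)

lemma vBoundary_cutoffRegion_eq (hmin : Minimal (SeparatesTail G f B · T) X)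
    (hXB : Disjoint X B) (hfX : ∀ n, T ≤ n → f n ∉ X) :
    vBoundary G (cutoffRegion G f X T) = X := by
  refine hmin.eq_of_subset (fun n hn b hb => ?_) vBoundary_cutoffRegion_subset
  refine not_reachAvoid_vBoundary (fun hbA => ?_) (mem_cutoffRegion hfX hn)
  exact Set.disjoint_left.1 (disjoint_cutoffRegion hmin.prop hXB) hbA hb

lemma minSepVertsEndsIn_cutoffRegion (hf : IsRay G f) (hmin : Minimal (SeparatesTail G f B · T) X)
    (hXB : Disjoint X B) (hfX : ∀ n, T ≤ n → f n ∉ X) (hB : B.Nonempty) :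
    MinSepVertsEndsIn G B (vBoundary G (cutoffRegion G f X T)) (cutoffRegion G f X T) := by
  have hAB := disjoint_cutoffRegion hmin.prop hXB
  rw [vBoundary_cutoffRegion_eq hmin hXB hfX]
  refine ⟨⟨fun hBX => ?_, fun b hb f' _ hf' n _ hreach => ?_⟩, fun S' hS' hsep' => ?_⟩
  · obtain ⟨b, hb⟩ := hB
    exact Set.disjoint_left.1 hXB (hBX hb) hb
  · refine not_reachAvoid_vBoundary (G := G) (Set.disjoint_right.1 hAB hb) (hf' ⟨n, rfl⟩) ?_
    rwa [vBoundary_cutoffRegion_eq hmin hXB hfX]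
  -- a proper subset of `X` lets some `b ∈ B` reach the tail of `f`, a ray inside the region
  have hnsep : ¬ SeparatesTail G f B S' T := fun h => hS'.2 (hmin.2 h hS'.1)
  simp only [SeparatesTail, not_forall, not_not] at hnsep
  obtain ⟨n, hn, b, hb, hreach⟩ := hnsep
  refine hsep'.2 b hb (fun k => f (T + k)) (hf.shift T)
    (Set.range_subset_iff.2 fun k => mem_cutoffRegion hfX (Nat.le_add_right T k)) (n - T)
    (fun k _ hk => hfX (T + k) (Nat.le_add_right T k) (hS'.1 hk)) ?_
  rwa [Nat.add_sub_cancel' hn]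

lemma nonempty_of_separatesTail (hf : ∀ n, G.Adj (f n) (f (n + 1)))
    (hsep : SeparatesTail G f B X T) (hreach : ∃ b ∈ B, ∃ n, G.Reachable b (f n)) :
    X.Nonempty := by
  obtain ⟨b, hb, n, hbn⟩ := hreach
  rw [Set.nonempty_iff_ne_empty]
  rintro rfl
  refine hsep (max n T) (le_max_right n T) b hb ?_
  exact (reachAvoid_empty_of_reachable hbn).trans
    (reachAvoid_of_adj_succ hf (le_max_left n T) fun _ _ => Set.notMem_empty _)

end TailRegion

section TailRegionSeq

structure IsTailRegion (G : SimpleGraph V) (f : ℕ → V) (B A : Set V) : Prop where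
  connected : (G.induce A).Connected
  finite_vBoundary : (vBoundary G A).Finite
  eventually_mem : ∀ᶠ n in atTop, f n ∈ A
  disjoint : Disjoint A B
  frequently_reachAvoid : ∀ u ∈ A, ∃ᶠ n in atTop, ReachAvoid G B u (f n)
  minSepVertsEndsIn : B.Nonempty → MinSepVertsEndsIn G B (vBoundary G A) A
  vBoundary_nonempty : (∃ b ∈ B, ∃ n, G.Reachable b (f n)) → (vBoundary G A).Nonempty

variable {G : SimpleGraph V} {f : ℕ → V} {B : Set V}

lemma exists_minimal_subset {P : Set V → Prop} {Y : Set V} (hY : Y.Finite) (hP : P Y) :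
    ∃ X ⊆ Y, Minimal P X := by
  obtain ⟨X, hXY, hX⟩ := (hY.finite_subsets.inter_of_left {X | P X}).exists_le_minimal
    (a := Y) ⟨fun _ h => h, hP⟩
  exact ⟨X, hXY, hX.prop.2, fun X' hX' hX'X => hX.2 ⟨hX'X.trans hXY, hX'⟩ hX'X⟩

theorem exists_isTailRegion (hf : IsRay G f) (hund : ∀ v, ¬ DominatesRay G v f)
    (hB : B.Finite) : ∃ A, IsTailRegion G f B A := by
  obtain ⟨Y, hY, hYB, hsep⟩ := exists_separatesTail hund hB
  obtain ⟨T, hT⟩ :=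
    eventually_atTop.1 (hsep.and (eventually_notMem_of_injective hf.inj (hY.union hB)))
  obtain ⟨X, hXY, hmin⟩ :=
    exists_minimal_subset (P := (SeparatesTail G f B · T)) hY fun n hn => (hT n hn).1
  have hfX : ∀ n, T ≤ n → f n ∉ X := fun n hn hX => (hT n hn).2 (Or.inl (hXY hX))
  have hfB : ∀ n, T ≤ n → f n ∉ B := fun n hn hb => (hT n hn).2 (Or.inr hb)
  have hXB : Disjoint X B := hYB.mono_left hXY
  have hbd := vBoundary_cutoffRegion_eq hmin hXB hfX
  exact ⟨cutoffRegion G f X T,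
    { connected := connected_induce_cutoffRegion hf.adj hfX
      finite_vBoundary := by rw [hbd]; exact hY.subset hXY
      eventually_mem := eventually_atTop.2 ⟨T, fun n hn => mem_cutoffRegion hfX hn⟩
      disjoint := disjoint_cutoffRegion hmin.prop hXB
      frequently_reachAvoid := fun u hu =>
        frequently_reachAvoid_of_mem_cutoffRegion hf.adj hmin.prop hXB hfB hu
      minSepVertsEndsIn := minSepVertsEndsIn_cutoffRegion hf hmin hXB hfX
      vBoundary_nonempty := fun h => by
        rw [hbd]; exact nonempty_of_separatesTail hf.adj hmin.prop h }⟩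

lemma IsTailRegion.subset_diff_vBoundary {A A' : Set V} (hA : IsTailRegion G f B A)
    (hA' : IsTailRegion G f (vBoundary G A) A') : A' ⊆ A \ vBoundary G A := by
  intro u hu
  obtain ⟨n, hreach, hn⟩ :=
    ((hA'.frequently_reachAvoid u hu).and_eventually hA.eventually_mem).exists
  exact ⟨by_contra fun huA => not_reachAvoid_vBoundary huA hn hreach, hreach.notMem_left⟩

def IsTailRegionSeq (G : SimpleGraph V) (f : ℕ → V) (B : Set V) (A : ℕ → Set V) : Prop :=
  IsTailRegion G f B (A 0) ∧ ∀ i, IsTailRegion G f (vBoundary G (A i)) (A (i + 1))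

theorem exists_isTailRegionSeq (hf : IsRay G f) (hund : ∀ v, ¬ DominatesRay G v f)
    (hB : B.Finite) : ∃ A, IsTailRegionSeq G f B A := by
  choose! cut hcut using fun (B : Set V) (hB : B.Finite) => exists_isTailRegion hf hund hB
  let bd : ℕ → Set V := fun i => (fun B : Set V => vBoundary G (cut B))^[i] B
  have bd_succ (i : ℕ) : bd (i + 1) = vBoundary G (cut (bd i)) :=
    Function.iterate_succ_apply' _ i B
  have hbd (i : ℕ) : (bd i).Finite := by
    induction i with
    | zero => exact hB
    | succ i ih => exact bd_succ i ▸ (hcut _ ih).finite_vBoundary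
  exact ⟨fun i => cut (bd i), hcut B hB, fun i => bd_succ i ▸ hcut _ (hbd (i + 1))⟩

namespace IsTailRegionSeq

variable {A : ℕ → Set V}

lemma exists_isTailRegion (hA : IsTailRegionSeq G f B A) (i : ℕ) :
    ∃ B', IsTailRegion G f B' (A i) := by
  cases i
  exacts [⟨B, hA.1⟩, ⟨_, hA.2 _⟩]

lemma succ_subset_diff_vBoundary (hA : IsTailRegionSeq G f B A) (i : ℕ) :
    A (i + 1) ⊆ A i \ vBoundary G (A i) :=
  let ⟨_, hAi⟩ := hA.exists_isTailRegion i
  hAi.subset_diff_vBoundary (hA.2 i)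

lemma vBoundary_nonempty (hA : IsTailRegionSeq G f B A)
    (hreach : ∃ b ∈ B, ∃ n, G.Reachable b (f n)) : ∀ i, (vBoundary G (A i)).Nonempty
  | 0 => hA.1.vBoundary_nonempty hreach
  | i + 1 => (hA.2 i).vBoundary_nonempty <| by
    obtain ⟨b, hb⟩ := hA.vBoundary_nonempty hreach i
    obtain ⟨_, hAi⟩ := hA.exists_isTailRegion i
    obtain ⟨n, hbn⟩ := (hAi.frequently_reachAvoid b hb.1).exists
    exact ⟨b, hb, n, hbn.reachable⟩

lemma strictAnti (hA : IsTailRegionSeq G f B A)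
    (hreach : ∃ b ∈ B, ∃ n, G.Reachable b (f n)) : StrictAnti A := by
  refine strictAnti_nat_of_succ_lt fun i => ?_
  have hsub := hA.succ_subset_diff_vBoundary i
  obtain ⟨x, hx⟩ := hA.vBoundary_nonempty hreach i
  exact ssubset_of_subset_not_subset (hsub.trans Set.sdiff_subset)
    fun h => (hsub (h hx.1)).2 hx

end IsTailRegionSeq

end TailRegionSeq

section DeletedEnd

variable {G : SimpleGraph V} {r : ℕ → V}

lemma exists_tail_in_Gmin (hr : IsRay G r) (hfin : (Dom G r).Finite) :
    ∃ (f : ℕ → ((Dom G r)ᶜ : Set V)) (N : ℕ), IsRay (Gmin G r) f ∧ ∀ n, (f n : V) = r (N + n) := by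
  obtain ⟨N, hN⟩ := eventually_atTop.1 (eventually_notMem_of_injective hr.inj hfin)
  exact ⟨fun n => ⟨r (N + n), hN _ (Nat.le_add_right N n)⟩, N, IsRay.induce (hr.shift N),
    fun _ => rfl⟩

variable {f : ℕ → ((Dom G r)ᶜ : Set V)} {N : ℕ}

lemma inDeletedEnd_shift (hr : IsRay G r) (hf : IsRay (Gmin G r) f)
    (hfr : ∀ n, (f n : V) = r (N + n)) (T : ℕ) : InDeletedEnd G r fun k => f (T + k) := by
  refine ⟨hf.shift T, ?_⟩
  simpa only [hfr, add_assoc] using equivRay_shift (G := G) hr.inj (N + T)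

lemma not_dominatesRay_Gmin (hfr : ∀ n, (f n : V) = r (N + n)) (v : ((Dom G r)ᶜ : Set V)) :
    ¬ DominatesRay (Gmin G r) v f := by
  intro h
  have hG : DominatesRay G v fun n => r (N + n) := by
    have := h.map (SimpleGraph.Embedding.induce _)
    rwa [show (SimpleGraph.Embedding.induce _ ∘ f : ℕ → V) = fun n => r (N + n) from
      funext hfr] at this
  exact v.2 hG.of_shift

lemma IsTailRegion.isOmegaRegion (hr : IsRay G r) (hf : IsRay (Gmin G r) f)
    (hfr : ∀ n, (f n : V) = r (N + n)) {B A : Set ((Dom G r)ᶜ : Set V)}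
    (hA : IsTailRegion (Gmin G r) f B A) : IsOmegaRegion G r A := by
  obtain ⟨T, hT⟩ := eventually_atTop.1 hA.eventually_mem
  exact ⟨hA.connected, hA.finite_vBoundary, _, inDeletedEnd_shift hr hf hfr T,
    Set.range_subset_iff.2 fun k => hT _ (Nat.le_add_right T k)⟩

theorem exists_converges_disjoint (hr : IsRay G r) (hfin : (Dom G r).Finite)
    {B : Set ((Dom G r)ᶜ : Set V)} (hB : B.Finite) :
    ∃ A, Converges G r A ∧ ∀ i, Disjoint (A i) B := by
  obtain ⟨f, N, hf, hfr⟩ := exists_tail_in_Gmin hr hfin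
  obtain ⟨A, hA⟩ := exists_isTailRegionSeq hf (not_dominatesRay_Gmin hfr) (hB.insert (f 0))
  have hreach : ∃ b ∈ insert (f 0) B, ∃ n, (Gmin G r).Reachable b (f n) :=
    ⟨f 0, Set.mem_insert _ _, 0, .refl _⟩
  have hanti := hA.strictAnti hreach
  refine ⟨A, ⟨hanti.injective, fun i => ?_, hA.succ_subset_diff_vBoundary,
    fun i => (hA.2 i).minSepVertsEndsIn (hA.vBoundary_nonempty hreach i)⟩,
    fun i => (hA.1.disjoint.mono_left (hanti.antitone (Nat.zero_le i))).mono_right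
      (Set.subset_insert _ _)⟩
  obtain ⟨_, hAi⟩ := hA.exists_isTailRegion i
  exact hAi.isOmegaRegion hr hf hfr

lemma relDegree_le_of_converges (hfin : (Dom G r).Finite) {A : ℕ → Set ((Dom G r)ᶜ : Set V)}
    (hA : Converges G r A) :
    relDegree G r ≤ (Dom G r).ncard + atTop.liminf fun i => bratio (Gmin G r) (A i) := by
  obtain ⟨_, hend, _⟩ := (hA.2.1 0).2.2
  rw [relDegree, if_neg (not_or.2 ⟨Set.not_infinite.2 hfin, not_not.2 ⟨_, hend⟩⟩),
    ← hfin.cast_ncard_eq, ENat.toENNReal_coe]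
  exact add_le_add_right
    (iInf_le (fun A : {A // Converges G r A} => atTop.liminf fun i => bratio (Gmin G r) (A.1 i))
      ⟨A, hA⟩) _

end DeletedEnd

lemma exists_lt_of_lt_coe_liminf {ι : Type*} {l : Filter ι} [l.NeBot] {u : ι → ℝ≥0∞}
    {x : EReal} (h : x < ((l.liminf u : ℝ≥0∞) : EReal)) : ∃ i, x < u i := by
  suffices ∀ᶠ i in l, x < u i from this.exists
  rcases lt_or_ge x 0 with hx | hx
  · exact Eventually.of_forall fun i => hx.trans_le (EReal.coe_ennreal_nonneg _)
  · rw [← EReal.coe_toENNReal hx, EReal.coe_ennreal_lt_coe_ennreal_iff] at h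
    filter_upwards [eventually_lt_of_lt_liminf h] with i hi
    rw [← EReal.coe_toENNReal hx]
    exact EReal.coe_ennreal_lt_coe_ennreal_iff.2 hi

/-- if the end of `r` has relative degree `> m` and finitely many
dominating vertices, then for every finite `S ⊆ V(G)` the graph `G_ω` has an
`ω̂`-region `Ĥ` avoiding `S` with `|∂_e Ĥ| / |∂_v Ĥ| > m - |Dom(ω)|`. -/
theorem cutoff_region (G : SimpleGraph V) (r : ℕ → V) (hr : IsRay G r) (m : ℚ)
    (hfin : (Dom G r).Finite)
    (hdeg : ((m : ℝ) : EReal) < (relDegree G r : EReal))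
    (S : Set V) (hS : S.Finite) :
    ∃ A : Set ((Dom G r)ᶜ : Set V), IsOmegaRegion G r A ∧
      (∀ x ∈ A, (x : V) ∉ S) ∧
      ((((m : ℝ) - (Dom G r).ncard) : ℝ) : EReal) <
        (bratio (Gmin G r) A : EReal) := by
  obtain ⟨A, hconv, hAS⟩ :=
    exists_converges_disjoint hr hfin (hS.preimage Subtype.val_injective.injOn)
  have hlim := hdeg.trans_le
    (EReal.coe_ennreal_le_coe_ennreal_iff.2 (relDegree_le_of_converges hfin hconv))
  rw [EReal.coe_ennreal_add, add_comm] at hlim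
  obtain ⟨i, hi⟩ := exists_lt_of_lt_coe_liminf (EReal.sub_lt_of_lt_add hlim)
  refine ⟨A i, hconv.2.1 i, fun x hx hxS => Set.disjoint_left.1 (hAS i) hx hxS, ?_⟩
  rw [EReal.coe_sub]
  convert hi using 2
  norm_cast

end Paper
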